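/- Let f : ℝ^d → ℝ be convex and differentiable, and let x_t, y ∈ ℝ^d. If ‖x_{t+1} − y‖² ≤ ‖x_t − y‖² + η_t²L² − 2η_t⟨∇f(x_t), x_t − y⟩ for each t = 1,…,T with η_t = 1/√t, and ‖x_t − y‖ ≤ D for all t, then ∑_{t=1}^T (f(x_t) − f(y)) ≤ (√T/2)(D² + 2L²). -/

import Mathlib

/-!
Convexity bounds each regret term `f x_t - f y` by `⟪∇f x_t, x_t - y⟫`, and the step inequality
bounds that by `√t/2 (‖x_t - y‖² - ‖x_{t+1} - y‖²) + L²/(2√t)`. Since the weights `√t/2`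
increase and `‖x_t - y‖² ≤ D²`, the first parts sum (by Abel summation) to at most `√T/2 · D²`,
and the second parts to at most `L² √T`, because `∑ 1/√t ≤ 2√T`.
-/

open RealInnerProductSpace Finset

theorem ConvexOn.apply_sub_le_of_hasFDerivAt {E : Type*} [NormedAddCommGroup E] [NormedSpace ℝ E]
    {S : Set E} {f : E → ℝ} {f' : E →L[ℝ] ℝ} {x y : E} (hf : ConvexOn ℝ S f)
    (hx : x ∈ S) (hy : y ∈ S) (hf' : HasFDerivAt f f' x) :
    f' (y - x) ≤ f y - f x := by
  let A : ℝ →ᵃ[ℝ] E := AffineMap.lineMap x y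
  have hderiv : HasDerivAt (f ∘ A) (f' (y - x)) 0 :=
    (show HasFDerivAt f f' (A 0) by simpa [A] using hf').comp_hasDerivAt 0
      AffineMap.hasDerivAt_lineMap
  simpa [slope, A] using (hf.comp_affineMap A).le_slope_of_hasDerivAt (x := 0) (y := 1)
    (by simpa [A] using hx) (by simpa [A] using hy) one_pos hderiv

theorem ConvexOn.inner_sub_le_of_hasGradientAt {F : Type*} [NormedAddCommGroup F]
    [InnerProductSpace ℝ F] [CompleteSpace F] {S : Set F} {f : F → ℝ} {a x y : F}
    (hf : ConvexOn ℝ S f) (hx : x ∈ S) (hy : y ∈ S) (ha : HasGradientAt f a x) :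
    f x - f y ≤ ⟪a, x - y⟫ := by
  have := hf.apply_sub_le_of_hasFDerivAt hx hy ha.hasFDerivAt
  rw [InnerProductSpace.toDual_apply_apply, ← neg_sub x y, inner_neg_right] at this
  linarith

theorem sum_Icc_one_div_sqrt_le (n : ℕ) :
    ∑ t ∈ Icc 1 n, 1 / √(t : ℝ) ≤ 2 * √(n : ℝ) := by
  induction n with
  | zero => simp
  | succ n ih =>
    rw [sum_Icc_succ_top (by omega), Nat.cast_succ]
    have hpos : 0 < √(n + 1 : ℝ) := Real.sqrt_pos.2 (by positivity)
    -- AM-GM: `√n √(n+1) ≤ n + 1/2`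
    have key : 1 / √(n + 1 : ℝ) ≤ 2 * √(n + 1 : ℝ) - 2 * √(n : ℝ) := by
      rw [div_le_iff₀ hpos]
      nlinarith [Real.sq_sqrt (by positivity : (0 : ℝ) ≤ n),
        Real.sq_sqrt (by positivity : (0 : ℝ) ≤ n + 1)]
    linarith

theorem sum_Icc_mul_sub_succ_le {w a : ℕ → ℝ} {M : ℝ} (hw : Monotone w) (hw0 : 0 ≤ w 0)
    (ha : ∀ t, a t ≤ M) (n : ℕ) :
    ∑ t ∈ Icc 1 n, w t * (a t - a (t + 1)) ≤ w n * (M - a (n + 1)) := by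
  induction n with
  | zero => simpa using mul_nonneg hw0 (sub_nonneg.2 (ha 1))
  | succ n ih =>
    rw [sum_Icc_succ_top (by omega)]
    nlinarith [hw n.le_succ, ha (n + 1)]

theorem le_of_le_add_sq_mul_sub_two_mul {r a b η G : ℝ} (hη : 0 < η)
    (h : b ≤ a + η ^ 2 * G - 2 * η * r) :
    r ≤ η⁻¹ / 2 * (a - b) + G / 2 * η := by
  have : r * (2 * η) ≤ (a - b) + η ^ 2 * G := by linarith
  field_simp
  nlinarith

theorem regret_bound_general (d : ℕ) (f : EuclideanSpace ℝ (Fin d) → ℝ)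
    (hconv : ConvexOn ℝ Set.univ f)
    (g : EuclideanSpace ℝ (Fin d) → EuclideanSpace ℝ (Fin d))
    (hgrad : ∀ x, HasGradientAt f (g x) x)
    (T : ℕ) (x : ℕ → EuclideanSpace ℝ (Fin d)) (y : EuclideanSpace ℝ (Fin d))
    (L D : ℝ)
    (hstep : ∀ t : ℕ, 1 ≤ t → t ≤ T →
      ‖x (t + 1) - y‖ ^ 2 ≤ ‖x t - y‖ ^ 2 + (1 / Real.sqrt t) ^ 2 * L ^ 2
        - 2 * (1 / Real.sqrt t) * ⟪g (x t), x t - y⟫)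
    (hdiam : ∀ t : ℕ, ‖x t - y‖ ≤ D) :
    ∑ t ∈ Finset.Icc 1 T, (f (x t) - f y) ≤ (Real.sqrt T / 2) * (D ^ 2 + 2 * L ^ 2) := by
  have hdiam_sq (t : ℕ) : ‖x t - y‖ ^ 2 ≤ D ^ 2 :=
    pow_le_pow_left₀ (norm_nonneg _) (hdiam t) 2
  have hregret (t : ℕ) (ht : t ∈ Icc 1 T) : f (x t) - f y ≤
      √(t : ℝ) / 2 * (‖x t - y‖ ^ 2 - ‖x (t + 1) - y‖ ^ 2) + L ^ 2 / 2 * (1 / √(t : ℝ)) := by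
    obtain ⟨h1, hT⟩ := mem_Icc.1 ht
    have hη : 0 < 1 / √(t : ℝ) := by positivity
    have := le_of_le_add_sq_mul_sub_two_mul hη (hstep t h1 hT)
    simp only [one_div, inv_inv] at this ⊢
    linarith [hconv.inner_sub_le_of_hasGradientAt (Set.mem_univ _) (Set.mem_univ y) (hgrad (x t))]
  calc ∑ t ∈ Icc 1 T, (f (x t) - f y)
      ≤ ∑ t ∈ Icc 1 T, (√(t : ℝ) / 2 * (‖x t - y‖ ^ 2 - ‖x (t + 1) - y‖ ^ 2)
          + L ^ 2 / 2 * (1 / √(t : ℝ))) := sum_le_sum hregret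
    _ = ∑ t ∈ Icc 1 T, √(t : ℝ) / 2 * (‖x t - y‖ ^ 2 - ‖x (t + 1) - y‖ ^ 2)
          + L ^ 2 / 2 * ∑ t ∈ Icc 1 T, 1 / √(t : ℝ) := by rw [sum_add_distrib, mul_sum]
    _ ≤ √(T : ℝ) / 2 * (D ^ 2 - ‖x (T + 1) - y‖ ^ 2) + L ^ 2 / 2 * (2 * √(T : ℝ)) := by
      gcongr
      · exact sum_Icc_mul_sub_succ_le (fun m n h => by gcongr) (by simp) hdiam_sq T
      · exact sum_Icc_one_div_sqrt_le T
    _ ≤ √(T : ℝ) / 2 * (D ^ 2 + 2 * L ^ 2) := by nlinarith [Real.sqrt_nonneg (T : ℝ)]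

theorem regret_bound (d : ℕ) (f : EuclideanSpace ℝ (Fin d) → ℝ)
    (hconv : ConvexOn ℝ Set.univ f)
    (g : EuclideanSpace ℝ (Fin d) → EuclideanSpace ℝ (Fin d))
    (hgrad : ∀ x, HasGradientAt f (g x) x)
    (T : ℕ) (x : ℕ → EuclideanSpace ℝ (Fin d)) (y : EuclideanSpace ℝ (Fin d))
    (L D : ℝ) (hL : 0 ≤ L) (hD : 0 ≤ D)
    (hstep : ∀ t : ℕ, 1 ≤ t → t ≤ T →
      ‖x (t + 1) - y‖ ^ 2 ≤ ‖x t - y‖ ^ 2 + (1 / Real.sqrt t) ^ 2 * L ^ 2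
        - 2 * (1 / Real.sqrt t) * ⟪g (x t), x t - y⟫)
    (hdiam : ∀ t : ℕ, ‖x t - y‖ ≤ D) :
    ∑ t ∈ Finset.Icc 1 T, (f (x t) - f y) ≤ (Real.sqrt T / 2) * (D ^ 2 + 2 * L ^ 2) :=
  regret_bound_general d f hconv g hgrad T x y L D hstep hdiam
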